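/- Let φ(x) = x/(1+x) and let Z be the operator (Zg)(x) = φ(x)·g′(x) on smooth functions on (0,∞). For every integer n ≥ 1, every infinitely differentiable function f : (0,∞) → ℝ, and every x > 0, Zⁿ(f′)(x) − (Zⁿf)′(x) = Σ_{k=1}^{n} (n choose k) · Z^k(1/φ)(x) · Z^{n−k+1}f(x), where 1/φ is the function x ↦ (1+x)/x. -/

import Mathlib

/-- The conormal operator `Z g (x) = (x/(1+x)) g′(x)` on functions on `(0,∞)`. -/
noncomputable def Zop (g : ℝ → ℝ) : ℝ → ℝ :=
  fun x => (x / (1 + x)) * deriv g x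

lemma psi_smooth : ContDiffOn ℝ (⊤ : ℕ∞) (fun y : ℝ => (1 + y) / y) (Set.Ioi 0) := by
  apply ContDiffOn.div (contDiffOn_const.add contDiffOn_id) contDiffOn_id
  intro x hx
  exact ne_of_gt hx

lemma phi_smooth : ContDiffOn ℝ (⊤ : ℕ∞) (fun x : ℝ => x / (1 + x)) (Set.Ioi 0) := by
  apply ContDiffOn.div contDiffOn_id (contDiffOn_const.add contDiffOn_id)
  intro x hx
  have : (0:ℝ) < x := hx
  positivity

lemma deriv_smooth {g : ℝ → ℝ} (hg : ContDiffOn ℝ (⊤ : ℕ∞) g (Set.Ioi 0)) :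
    ContDiffOn ℝ (⊤ : ℕ∞) (deriv g) (Set.Ioi 0) :=
  hg.deriv_of_isOpen isOpen_Ioi le_rfl

lemma Zop_smooth {g : ℝ → ℝ} (hg : ContDiffOn ℝ (⊤ : ℕ∞) g (Set.Ioi 0)) :
    ContDiffOn ℝ (⊤ : ℕ∞) (Zop g) (Set.Ioi 0) :=
  phi_smooth.mul (deriv_smooth hg)

lemma iter_smooth {g : ℝ → ℝ} (hg : ContDiffOn ℝ (⊤ : ℕ∞) g (Set.Ioi 0)) (n : ℕ) :
    ContDiffOn ℝ (⊤ : ℕ∞) (Zop^[n] g) (Set.Ioi 0) := by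
  induction n with
  | zero => exact hg
  | succ n ih => rw [Function.iterate_succ_apply']; exact Zop_smooth ih

lemma diffAt {g : ℝ → ℝ} (hg : ContDiffOn ℝ (⊤ : ℕ∞) g (Set.Ioi 0)) {x : ℝ} (hx : 0 < x) :
    DifferentiableAt ℝ g x :=
  (hg.contDiffAt (isOpen_Ioi.mem_nhds hx)).differentiableAt (by simp)

lemma pascal (n : ℕ) (A B : ℕ → ℝ) :
    ∑ k ∈ Finset.range (n+1),
      (n.choose k : ℝ) * (A (k+1) * B (n-k+1) + A k * B (n-k+2))
    = ∑ k ∈ Finset.range (n+2), ((n+1).choose k : ℝ) * (A k * B (n+1-k+1)) := by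
  rw [Finset.sum_range_succ'
    (fun k => ((n+1).choose k : ℝ) * (A k * B (n+1-k+1))) (n+1)]
  have h1 : ∀ k ∈ Finset.range (n+1),
      ((n+1).choose (k+1) : ℝ) * (A (k+1) * B (n+1-(k+1)+1))
      = (n.choose k : ℝ) * (A (k+1) * B (n-k+1))
        + (n.choose (k+1) : ℝ) * (A (k+1) * B (n-k+1)) := by
    intro k hk
    have : n+1-(k+1) = n-k := by omega
    rw [this, Nat.choose_succ_succ']
    push_cast
    ring
  rw [Finset.sum_congr rfl h1, Finset.sum_add_distrib]
  have h2 : ∑ k ∈ Finset.range (n+1),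
      (n.choose k : ℝ) * (A (k+1) * B (n-k+1) + A k * B (n-k+2))
      = ∑ k ∈ Finset.range (n+1), (n.choose k : ℝ) * (A (k+1) * B (n-k+1))
        + ∑ k ∈ Finset.range (n+1), (n.choose k : ℝ) * (A k * B (n-k+2)) := by
    rw [← Finset.sum_add_distrib]
    exact Finset.sum_congr rfl (fun k hk => by ring)
  rw [h2]
  have h3 : ∑ k ∈ Finset.range (n+1), (n.choose k : ℝ) * (A k * B (n-k+2))
      = ∑ k ∈ Finset.range (n+1), (n.choose (k+1) : ℝ) * (A (k+1) * B (n-k+1))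
        + ((n+1).choose 0 : ℝ) * (A 0 * B (n+1-0+1)) := by
    rw [Finset.sum_range_succ' (fun k => (n.choose k : ℝ) * (A k * B (n-k+2))) n]
    rw [Finset.sum_range_succ
      (fun k => (n.choose (k+1) : ℝ) * (A (k+1) * B (n-k+1))) n]
    simp only [Nat.choose_succ_self, Nat.cast_zero, zero_mul, add_zero]
    congr 1
    · apply Finset.sum_congr rfl
      intro k hk
      simp only [Finset.mem_range] at hk
      have : n-(k+1)+2 = n-k+1 := by omega
      rw [this]
    · norm_num
  rw [h3]
  ring

lemma key (f : ℝ → ℝ) (hf : ContDiffOn ℝ (⊤ : ℕ∞) f (Set.Ioi 0)) :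
    ∀ n : ℕ, ∀ x : ℝ, 0 < x →
      Zop^[n] (deriv f) x
        = ∑ k ∈ Finset.range (n+1),
            (n.choose k : ℝ) * (Zop^[k] (fun y => (1+y)/y) x * Zop^[n-k+1] f x) := by
  intro n
  induction n with
  | zero =>
    intro x hx
    have hx0 : x ≠ 0 := ne_of_gt hx
    have hx1 : (1:ℝ) + x ≠ 0 := by positivity
    norm_num [Zop]
    field_simp
  | succ n ih =>
    intro x hx
    have hmem : Set.Ioi (0:ℝ) ∈ nhds x := isOpen_Ioi.mem_nhds hx
    have heq : Zop^[n] (deriv f) =ᶠ[nhds x]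
        (fun y => ∑ k ∈ Finset.range (n+1),
          (n.choose k : ℝ) * (Zop^[k] (fun y => (1+y)/y) y * Zop^[n-k+1] f y)) :=
      Filter.eventuallyEq_of_mem hmem (fun y hy => ih y hy)
    have H : ∀ k ∈ Finset.range (n+1),
        HasDerivAt (fun y => (n.choose k : ℝ) * (Zop^[k] (fun y => (1+y)/y) y * Zop^[n-k+1] f y))
          ((n.choose k : ℝ) * (deriv (Zop^[k] (fun y => (1+y)/y)) x * Zop^[n-k+1] f x
            + Zop^[k] (fun y => (1+y)/y) x * deriv (Zop^[n-k+1] f) x)) x := by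
      intro k _
      exact HasDerivAt.const_mul _
        (((diffAt (iter_smooth psi_smooth k) hx).hasDerivAt).mul
          ((diffAt (iter_smooth hf (n-k+1)) hx).hasDerivAt))
    have hder : deriv (Zop^[n] (deriv f)) x
        = ∑ k ∈ Finset.range (n+1),
            (n.choose k : ℝ) * (deriv (Zop^[k] (fun y => (1+y)/y)) x * Zop^[n-k+1] f x
              + Zop^[k] (fun y => (1+y)/y) x * deriv (Zop^[n-k+1] f) x) := by
      rw [heq.deriv_eq]
      exact (HasDerivAt.fun_sum H).deriv
    rw [Function.iterate_succ_apply']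
    show (x / (1+x)) * deriv (Zop^[n] (deriv f)) x = _
    rw [hder, Finset.mul_sum]
    have hterm : ∀ k ∈ Finset.range (n+1),
        (x / (1+x)) * ((n.choose k : ℝ) * (deriv (Zop^[k] (fun y => (1+y)/y)) x * Zop^[n-k+1] f x
          + Zop^[k] (fun y => (1+y)/y) x * deriv (Zop^[n-k+1] f) x))
        = (n.choose k : ℝ) * (Zop^[k+1] (fun y => (1+y)/y) x * Zop^[n-k+1] f x
          + Zop^[k] (fun y => (1+y)/y) x * Zop^[n-k+2] f x) := by
      intro k _
      have e1 : Zop^[k+1] (fun y => (1+y)/y) x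
          = (x / (1+x)) * deriv (Zop^[k] (fun y => (1+y)/y)) x := by
        rw [Function.iterate_succ_apply']; rfl
      have e2 : Zop^[n-k+2] f x = (x / (1+x)) * deriv (Zop^[n-k+1] f) x := by
        show Zop^[(n-k+1)+1] f x = _
        rw [Function.iterate_succ_apply']; rfl
      rw [e1, e2]; ring
    rw [Finset.sum_congr rfl hterm]
    exact pascal n (fun k => Zop^[k] (fun y => (1+y)/y) x) (fun j => Zop^[j] f x)

/-- Commutator identity between the iterated conormal field `Zⁿ` and the
derivative `∂`: `Zⁿ ∂f − ∂ Zⁿ f = Σ_{k=1}^{n} (n choose k) Z^k(1/φ) Z^{n−k+1} f`. -/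
theorem stmt16 :
    ∀ n : ℕ, 1 ≤ n → ∀ f : ℝ → ℝ, ContDiffOn ℝ (⊤ : ℕ∞) f (Set.Ioi 0) →
    ∀ x : ℝ, 0 < x →
      Zop^[n] (deriv f) x - deriv (Zop^[n] f) x =
        ∑ k ∈ Finset.Icc 1 n,
          (n.choose k : ℝ) * Zop^[k] (fun y => (1 + y) / y) x * Zop^[n - k + 1] f x := by
  intro n hn f hf x hx
  have hx0 : x ≠ 0 := ne_of_gt hx
  have hx1 : (1:ℝ) + x ≠ 0 := by positivity
  have hk := key f hf n x hx
  rw [Finset.sum_range_succ'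
    (fun k => (n.choose k : ℝ) * (Zop^[k] (fun y => (1+y)/y) x * Zop^[n-k+1] f x)) n] at hk
  have h0 : (n.choose 0 : ℝ) * (Zop^[0] (fun y => (1+y)/y) x * Zop^[n-0+1] f x)
      = deriv (Zop^[n] f) x := by
    have e : Zop^[n-0+1] f x = (x / (1+x)) * deriv (Zop^[n] f) x := by
      show Zop^[n+1] f x = _
      rw [Function.iterate_succ_apply']; rfl
    rw [e]
    simp only [Nat.choose_zero_right, Nat.cast_one, one_mul, Function.iterate_zero_apply]
    field_simp
  rw [h0] at hk
  rw [hk]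
  rw [← Finset.Ico_add_one_right_eq_Icc, Finset.sum_Ico_eq_sum_range, Nat.add_sub_cancel]
  have : ∀ k ∈ Finset.range n,
      (n.choose (1+k) : ℝ) * Zop^[1+k] (fun y => (1 + y) / y) x * Zop^[n-(1+k)+1] f x
      = (n.choose (k+1) : ℝ) * (Zop^[k+1] (fun y => (1+y)/y) x * Zop^[n-(k+1)+1] f x) := by
    intro k _
    rw [Nat.add_comm 1 k, mul_assoc]
  rw [Finset.sum_congr rfl this]
  ring
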